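/- Let G be a torsion-free abelian group and let a₁, …, a_q be elements of G. Suppose q ≥ r > s > 1 and the tuple (a₁, …, a_q) has property (P_{r,s}): for any r indices l(1) < ⋯ < l(r) and any choice of s positions i₁ < ⋯ < i_s among {1,…,r}, there exist s positions j₁ < ⋯ < j_s among {1,…,r} with {i₁,…,i_s} ≠ {j₁,…,j_s} and a_{l(i₁)}⋯a_{l(i_s)} = a_{l(j₁)}⋯a_{l(j_s)}. Then there exist indices 1 ≤ i₁ < ⋯ < i_{q-r+2} ≤ q with a_{i₁} = a_{i₂} = ⋯ = a_{i_{q-r+2}}. -/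

import Mathlib

open Finset

/-- If every element of `A` is smaller than every element of `B` and the two finsets
have the same (positive) cardinality, then the product over `A` is smaller. -/
private lemma fuji_prod_lt_prod {α M : Type*} [DecidableEq α] [CommGroup M] [LinearOrder M] [IsOrderedMonoid M]
    (f : α → M) (A B : Finset α) (hcard : A.card = B.card) (hA : A.Nonempty)
    (h : ∀ x ∈ A, ∀ y ∈ B, f x < f y) :
    (∏ x ∈ A, f x) < ∏ y ∈ B, f y := by
  haveI := hA.to_subtype
  have e : ↥A ≃ ↥B := Fintype.equivOfCardEq (by simp [hcard])
  rw [← Finset.prod_coe_sort A f, ← Finset.prod_coe_sort B f,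
    ← Equiv.prod_comp e (fun y : ↥B => f ↑y)]
  exact Finset.prod_lt_prod_of_nonempty' Finset.univ_nonempty
    (fun x _ => h ↑x x.2 ↑(e x) (e x).2)

/-- The combinatorial core of Fujimoto's proposition, for tuples in a linearly
ordered commutative group. -/
private lemma fuji_comb {L : Type*} [CommGroup L] [LinearOrder L] [IsOrderedMonoid L] {q r s : ℕ} (hqr : q ≥ r)
    (hrs : r > s) (hs : s > 1) (f : Fin q → L)
    (hP : ∀ l : Fin r → Fin q, StrictMono l → ∀ i : Fin s → Fin r, StrictMono i →
      ∃ j : Fin s → Fin r, StrictMono j ∧ Set.range i ≠ Set.range j ∧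
        (∏ t, f (l (i t))) = ∏ t, f (l (j t))) :
    ∃ ι : Fin (q - r + 2) → Fin q, StrictMono ι ∧
      ∀ t t' : Fin (q - r + 2), f (ι t) = f (ι t') := by
  classical
  set σ := Tuple.sort f with hσ
  have hmono : Monotone (f ∘ σ) := Tuple.monotone_sort f
  by_cases hjump : ∃ p p' : Fin q, (p' : ℕ) + 1 = p ∧ s ≤ (p : ℕ) ∧ (p : ℕ) ≤ q - r + s ∧
      f (σ p') < f (σ p)
  · -- jump case: derive a contradiction with property (P)
    exfalso
    obtain ⟨p, p', hp1, hps, hpq, hglt⟩ := hjump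
    -- the block of `r` consecutive positions around the jump
    have hbound : ∀ t : Fin r, (p : ℕ) - s + (t : ℕ) < q := by
      intro t; have := t.isLt; have := p.isLt; omega
    set Lset : Finset (Fin q) :=
      Finset.image (fun t : Fin r => σ ⟨(p : ℕ) - s + (t : ℕ), hbound t⟩) Finset.univ with hLset
    have hLinj : Function.Injective
        (fun t : Fin r => σ ⟨(p : ℕ) - s + (t : ℕ), hbound t⟩) := by
      intro t u htu
      apply Fin.ext
      have h2 : (p : ℕ) - s + (t : ℕ) = (p : ℕ) - s + (u : ℕ) := by
        simpa using σ.injective htu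
      omega
    have hLcard : Lset.card = r := by
      rw [hLset, Finset.card_image_of_injective _ hLinj, Finset.card_univ, Fintype.card_fin]
    set l : Fin r → Fin q := ⇑(Lset.orderEmbOfFin hLcard) with hl
    have hlsm : StrictMono l := (Lset.orderEmbOfFin hLcard).strictMono
    -- key value estimates on the block
    have hkey : ∀ t : Fin r, ((t : ℕ) < s → f (σ ⟨(p : ℕ) - s + (t : ℕ), hbound t⟩) < f (σ p)) ∧
        (s ≤ (t : ℕ) → f (σ p) ≤ f (σ ⟨(p : ℕ) - s + (t : ℕ), hbound t⟩)) := by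
      intro t
      constructor
      · intro ht
        have hle : (⟨(p : ℕ) - s + (t : ℕ), hbound t⟩ : Fin q) ≤ p' := by
          rw [Fin.le_def]
          show (p : ℕ) - s + (t : ℕ) ≤ (p' : ℕ)
          omega
        exact lt_of_le_of_lt (hmono hle) hglt
      · intro ht
        have hle : p ≤ (⟨(p : ℕ) - s + (t : ℕ), hbound t⟩ : Fin q) := by
          rw [Fin.le_def]
          show (p : ℕ) ≤ (p : ℕ) - s + (t : ℕ)
          omega
        exact hmono hle
    -- the set of positions in the block holding the `s` small values
    set I : Finset (Fin r) := Finset.filter (fun u => f (l u) < f (σ p)) Finset.univ with hI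
    have hsbound : ∀ t : Fin s, (p : ℕ) - s + (t : ℕ) < q := by
      intro t; have := t.isLt; have := p.isLt; omega
    set Smallset : Finset (Fin q) :=
      Finset.image (fun t : Fin s => σ ⟨(p : ℕ) - s + (t : ℕ), hsbound t⟩) Finset.univ with hSm
    have hSminj : Function.Injective
        (fun t : Fin s => σ ⟨(p : ℕ) - s + (t : ℕ), hsbound t⟩) := by
      intro t u htu
      apply Fin.ext
      have h2 : (p : ℕ) - s + (t : ℕ) = (p : ℕ) - s + (u : ℕ) := by
        simpa using σ.injective htu
      omega
    have hSmcard : Smallset.card = s := by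
      rw [hSm, Finset.card_image_of_injective _ hSminj, Finset.card_univ, Fintype.card_fin]
    have himage : Finset.image l I = Smallset := by
      apply Finset.ext
      intro x
      constructor
      · intro hx
        obtain ⟨u, hu, hux⟩ := Finset.mem_image.mp hx
        have hufil : f (l u) < f (σ p) := (Finset.mem_filter.mp hu).2
        have hlu : l u ∈ Lset := Lset.orderEmbOfFin_mem hLcard u
        obtain ⟨t, _, htu⟩ := Finset.mem_image.mp hlu
        have hts : (t : ℕ) < s := by
          by_contra hts
          have := (hkey t).2 (le_of_not_gt hts)
          rw [htu] at this
          exact absurd hufil (not_lt.mpr this)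
        rw [← hux, ← htu]
        exact Finset.mem_image.mpr ⟨⟨(t : ℕ), hts⟩, Finset.mem_univ _, rfl⟩
      · intro hx
        obtain ⟨t, _, htx⟩ := Finset.mem_image.mp hx
        have htr : (t : ℕ) < r := lt_trans t.isLt hrs
        have hxL : x ∈ Lset := by
          rw [← htx]
          exact Finset.mem_image.mpr ⟨⟨(t : ℕ), htr⟩, Finset.mem_univ _, rfl⟩
        have : x ∈ Set.range l := by
          rw [hl, Finset.range_orderEmbOfFin]
          exact_mod_cast hxL
        obtain ⟨u, hux⟩ := this
        have hfx : f x < f (σ p) := by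
          rw [← htx]
          exact (hkey ⟨(t : ℕ), htr⟩).1 t.isLt
        refine Finset.mem_image.mpr ⟨u, ?_, hux⟩
        rw [hI, Finset.mem_filter]
        exact ⟨Finset.mem_univ _, by rw [hux]; exact hfx⟩
    have hIcard : I.card = s := by
      have := Finset.card_image_of_injective I (Lset.orderEmbOfFin hLcard).injective
      rw [← hl] at this
      rw [← hSmcard, ← himage, this]
    set i : Fin s → Fin r := ⇑(I.orderEmbOfFin hIcard) with hi
    have hism : StrictMono i := (I.orderEmbOfFin hIcard).strictMono
    obtain ⟨j, hjsm, hrange, hprod⟩ := hP l hlsm i hism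
    set J : Finset (Fin r) := Finset.image j Finset.univ with hJ
    have hJcard : J.card = s := by
      rw [hJ, Finset.card_image_of_injective _ hjsm.injective, Finset.card_univ, Fintype.card_fin]
    have hrangei : Set.range i = ↑I := by
      rw [hi]; exact Finset.range_orderEmbOfFin I hIcard
    have hrangej : Set.range j = ↑J := by
      rw [hJ, Finset.coe_image, Finset.coe_univ, Set.image_univ]
    have hIJ : I ≠ J := by
      intro hIJ
      apply hrange
      rw [hrangei, hrangej, hIJ]
    -- rewrite the products as products over I and J
    have hImg : Finset.image i Finset.univ = I := by
      apply Finset.coe_injective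
      rw [Finset.coe_image, Finset.coe_univ, Set.image_univ, hrangei]
    have hprodI : (∏ t, f (l (i t))) = ∏ u ∈ I, f (l u) := by
      rw [← hImg,
        Finset.prod_image (f := fun u => f (l u)) (fun x _ y _ h => hism.injective h)]
    have hprodJ : (∏ t, f (l (j t))) = ∏ u ∈ J, f (l u) := by
      rw [hJ,
        Finset.prod_image (f := fun u => f (l u)) (fun x _ y _ h => hjsm.injective h)]
    have heq : (∏ u ∈ I, f (l u)) = ∏ u ∈ J, f (l u) := by
      rw [← hprodI, ← hprodJ]; exact hprod
    -- but the product over I is strictly smaller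
    have hne : (I \ J).Nonempty := by
      rw [Finset.sdiff_nonempty]
      intro hsub
      exact hIJ (Finset.eq_of_subset_of_card_le hsub (by rw [hIcard, hJcard]))
    have hcards : (I \ J).card = (J \ I).card :=
      Finset.card_sdiff_comm (by rw [hIcard, hJcard])
    have hptwise : ∀ x ∈ I \ J, ∀ y ∈ J \ I, f (l x) < f (l y) := by
      intro x hx y hy
      have hxI : x ∈ I := (Finset.mem_sdiff.mp hx).1
      have hyI : y ∉ I := (Finset.mem_sdiff.mp hy).2
      have h1 : f (l x) < f (σ p) := (Finset.mem_filter.mp hxI).2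
      have h2 : f (σ p) ≤ f (l y) := by
        by_contra h2
        exact hyI (Finset.mem_filter.mpr ⟨Finset.mem_univ _, not_le.mp h2⟩)
      exact lt_of_lt_of_le h1 h2
    have hlt : (∏ u ∈ I \ J, f (l u)) < ∏ u ∈ J \ I, f (l u) :=
      fuji_prod_lt_prod (fun u => f (l u)) _ _ hcards hne hptwise
    have hsplitI : (∏ u ∈ I, f (l u)) = (∏ u ∈ I \ J, f (l u)) * ∏ u ∈ I ∩ J, f (l u) := by
      rw [← Finset.sdiff_inter_self_left I J]
      exact (Finset.prod_sdiff (Finset.inter_subset_left)).symm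
    have hsplitJ : (∏ u ∈ J, f (l u)) = (∏ u ∈ J \ I, f (l u)) * ∏ u ∈ I ∩ J, f (l u) := by
      rw [Finset.inter_comm, ← Finset.sdiff_inter_self_left J I]
      exact (Finset.prod_sdiff (Finset.inter_subset_left)).symm
    rw [hsplitI, hsplitJ] at heq
    exact absurd heq (ne_of_lt (mul_lt_mul_left hlt _))
  · -- no-jump case: `q - r + 2` consecutive sorted values coincide
    push_neg at hjump
    have hq : 0 < q := by omega
    have hconst : ∀ m : ℕ, ∀ _hm : s - 1 + m ≤ q - r + s,
        f (σ ⟨s - 1 + m, by omega⟩) = f (σ ⟨s - 1, by omega⟩) := by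
      intro m
      induction m with
      | zero => intro _; rfl
      | succ k ih =>
        intro hk
        have hk' : s - 1 + k ≤ q - r + s := by omega
        rw [← ih hk']
        set p : Fin q := ⟨s - 1 + (k + 1), by omega⟩ with hp
        set p' : Fin q := ⟨s - 1 + k, by omega⟩ with hp'
        have h1 : (p' : ℕ) + 1 = p := by simp [hp, hp']; omega
        have h2 : s ≤ (p : ℕ) := by simp [hp]; omega
        have h3 : (p : ℕ) ≤ q - r + s := by simp [hp]; omega
        have hnlt := hjump p p' h1 h2 h3
        have hle : p' ≤ p := by
          rw [Fin.le_def]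
          show s - 1 + k ≤ s - 1 + (k + 1)
          omega
        exact le_antisymm hnlt (hmono hle)
    have hbound2 : ∀ t : Fin (q - r + 2), s - 1 + (t : ℕ) < q := by
      intro t; have := t.isLt; omega
    set F : Finset (Fin q) :=
      Finset.image (fun t : Fin (q - r + 2) => σ ⟨s - 1 + (t : ℕ), hbound2 t⟩) Finset.univ with hF
    have hFinj : Function.Injective
        (fun t : Fin (q - r + 2) => σ ⟨s - 1 + (t : ℕ), hbound2 t⟩) := by
      intro t u htu
      apply Fin.ext
      have h2 : s - 1 + (t : ℕ) = s - 1 + (u : ℕ) := by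
        simpa using σ.injective htu
      omega
    have hFcard : F.card = q - r + 2 := by
      rw [hF, Finset.card_image_of_injective _ hFinj, Finset.card_univ, Fintype.card_fin]
    refine ⟨fun t => F.orderEmbOfFin hFcard t, (F.orderEmbOfFin hFcard).strictMono, ?_⟩
    have hval : ∀ t : Fin (q - r + 2), f (F.orderEmbOfFin hFcard t) = f (σ ⟨s - 1, by omega⟩) := by
      intro t
      have hmem : F.orderEmbOfFin hFcard t ∈ F := F.orderEmbOfFin_mem hFcard t
      obtain ⟨u, _, hu⟩ := Finset.mem_image.mp hmem
      rw [← hu]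
      have := u.isLt
      exact hconst (u : ℕ) (by omega)
    intro t t'
    rw [hval t, hval t']


/-- A bundled linearly ordered commutative group with an injective embedding of `G'`. -/
private structure FujiEmb (G' : Type*) [CommGroup G'] where
  carrier : Type
  [inst : CommGroup carrier]
  [inst2 : LinearOrder carrier]
  [inst3 : IsOrderedMonoid carrier]
  emb : G' →* carrier
  inj : Function.Injective emb

attribute [instance] FujiEmb.inst
attribute [instance] FujiEmb.inst2
attribute [instance] FujiEmb.inst3

/-- A finitely generated torsion-free abelian group embeds in a linearly ordered
abelian group. -/
private lemma fuji_emb {G' : Type*} [CommGroup G'] (htf : ∀ g : G', g ≠ 1 → ¬IsOfFinOrder g)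
    (hfg : Group.FG G') : Nonempty (FujiEmb G') := by
  haveI : IsAddTorsionFree (Additive G') := by
    rw [isAddTorsionFree_iff_not_isOfFinAddOrder]
    intro x hx hfin
    exact htf (Additive.toMul x) hx (isOfFinAddOrder_ofMul_iff.mp hfin)
  haveI : Module.Finite ℤ (Additive G') := by
    rw [Module.Finite.iff_addGroup_fg, ← GroupFG.iff_add_fg]
    exact hfg
  haveI : Module.Free ℤ (Additive G') := Module.free_of_finite_type_torsion_free'
  set n := Fintype.card (Module.Free.ChooseBasisIndex ℤ (Additive G')) with hn
  letI : WellFoundedLT (Fin n) := inferInstance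
  letI : IsOrderedAddMonoid (Lex (Fin n → ℤ)) := inferInstance
  set e : Additive G' ≃ₗ[ℤ] (Fin n → ℤ) :=
    ((Module.Free.chooseBasis ℤ (Additive G')).reindex (Fintype.equivFin _)).equivFun with he
  set φ : G' →* Multiplicative (Lex (Fin n → ℤ)) :=
    { toFun := fun x => Multiplicative.ofAdd (toLex (e (Additive.ofMul x)))
      map_one' := by simp
      map_mul' := by
        intro x y
        show Multiplicative.ofAdd (toLex (e (Additive.ofMul (x * y)))) =
          Multiplicative.ofAdd (toLex (e (Additive.ofMul x))) *
            Multiplicative.ofAdd (toLex (e (Additive.ofMul y)))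
        rw [← ofAdd_add]
        have h0 : Additive.ofMul (x * y) = Additive.ofMul x + Additive.ofMul y := rfl
        rw [h0, map_add]
        rfl } with hphi
  have hφinj : Function.Injective φ := by
    intro x y hxy
    have h1 : toLex (e (Additive.ofMul x)) = toLex (e (Additive.ofMul y)) :=
      Multiplicative.ofAdd.injective hxy
    have h2 : e (Additive.ofMul x) = e (Additive.ofMul y) := toLex.injective h1
    exact Additive.ofMul.injective (e.injective h2)
  exact ⟨⟨Multiplicative (Lex (Fin n → ℤ)), by exact φ, by exact hφinj⟩⟩

set_option maxHeartbeats 2000000 in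
/-- Fujimoto's proposition: property `(P_{r,s})` of a `q`-tuple in a torsion-free
abelian group forces `q - r + 2` equal elements. -/
theorem stmt_15 (G : Type*) [CommGroup G] (hG : ∀ g : G, g ≠ 1 → ¬IsOfFinOrder g)
    (q r s : ℕ) (hqr : q ≥ r) (hrs : r > s) (hs : s > 1)
    (a : Fin q → G)
    (hP : ∀ l : Fin r → Fin q, StrictMono l →
      ∀ i : Fin s → Fin r, StrictMono i →
        ∃ j : Fin s → Fin r, StrictMono j ∧
          Set.range i ≠ Set.range j ∧
          (∏ t, a (l (i t))) = ∏ t, a (l (j t))) :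
    ∃ ι : Fin (q - r + 2) → Fin q, StrictMono ι ∧
      ∀ t t' : Fin (q - r + 2), a (ι t) = a (ι t') := by
  classical
  set H := Subgroup.closure (Set.range a) with hH
  have hHtf : ∀ g : H, g ≠ 1 → ¬IsOfFinOrder g :=
    fun g hg hfin => hG g (fun h => hg (Subtype.ext h)) (H.subtype.isOfFinOrder hfin)
  have hHfg : Group.FG H := by
    rw [Group.fg_iff_subgroup_fg]
    exact (Subgroup.fg_iff _).mpr ⟨Set.range a, rfl, Set.finite_range a⟩
  obtain ⟨E⟩ := fuji_emb hHtf hHfg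
  set b : Fin q → H := fun k => ⟨a k, Subgroup.subset_closure (Set.mem_range_self k)⟩ with hb
  set f : Fin q → E.carrier := fun k => E.emb (b k) with hf
  have hkey : ∀ (g₁ g₂ : Fin s → Fin q),
      ((∏ t, a (g₁ t)) = ∏ t, a (g₂ t)) → (∏ t, f (g₁ t)) = ∏ t, f (g₂ t) := by
    intro g₁ g₂ hgg
    have hb12 : (∏ t, b (g₁ t)) = ∏ t, b (g₂ t) := by
      apply Subtype.ext
      push_cast
      exact hgg
    calc (∏ t, f (g₁ t)) = E.emb (∏ t, b (g₁ t)) := (map_prod E.emb _ Finset.univ).symm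
      _ = E.emb (∏ t, b (g₂ t)) := by rw [hb12]
      _ = ∏ t, f (g₂ t) := map_prod E.emb _ Finset.univ
  have hPf : ∀ l : Fin r → Fin q, StrictMono l → ∀ i : Fin s → Fin r, StrictMono i →
      ∃ j : Fin s → Fin r, StrictMono j ∧ Set.range i ≠ Set.range j ∧
        (∏ t, f (l (i t))) = ∏ t, f (l (j t)) := by
    intro l hl i hi
    obtain ⟨j, hj, hrange, hprod⟩ := hP l hl i hi
    exact ⟨j, hj, hrange, hkey (fun t => l (i t)) (fun t => l (j t)) hprod⟩
  obtain ⟨ι, hι, hconst⟩ := fuji_comb hqr hrs hs f hPf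
  refine ⟨ι, hι, fun t t' => ?_⟩
  have := E.inj (hconst t t')
  exact congrArg Subtype.val this
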